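/- arXiv:1312.1498 — 4 statements merged into one kernel-verified Lean document; each statement's English description precedes it below -/
import Mathlib

section
/- For the Lévy measure ν(ds) = (α/Γ(1-α)) s^{-α-1} e^{-θ s} ds with 0 < α < 1 and θ > 0, the associated Bernšteĭn function equals f(x) = (x+θ)^α - θ^α for all x ≥ 0, i.e. ∫_0^∞ (1 - e^{-s x}) (α/Γ(1-α)) s^{-α-1} e^{-θ s} ds = (x+θ)^α - θ^α. -/
/-!
Since `e^{-sx} e^{-θs} = e^{-(x+θ)s}`, the integral is `α / Γ(1-α) * (J(x+θ) - J(θ))` with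
`J(c) = ∫₀^∞ (1 - e^{-cs}) s^{-α-1} ds`. Integrating `J(c)` by parts against `d(s^{-α})`, the
boundary terms vanish and `α J(c) = c ∫₀^∞ s^{-α} e^{-cs} ds = c · c^{α-1} Γ(1-α) = Γ(1-α) c^α`.
-/

open MeasureTheory Real Set Filter Topology

lemma one_sub_exp_neg_nonneg {t : ℝ} (ht : 0 ≤ t) : 0 ≤ 1 - exp (-t) := by
  linarith [exp_le_one_iff.mpr (neg_nonpos.mpr ht)]

lemma one_sub_exp_neg_le_self (t : ℝ) : 1 - exp (-t) ≤ t := by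
  linarith [one_sub_le_exp_neg t]

lemma one_sub_exp_neg_le_one (t : ℝ) : 1 - exp (-t) ≤ 1 := by
  linarith [exp_pos (-t)]

section TemperedStable

variable {c s : ℝ}

lemma one_sub_exp_neg_mul_mul_rpow_nonneg (hc : 0 ≤ c) (hs : 0 < s) (β : ℝ) :
    0 ≤ (1 - exp (-(c * s))) * s ^ β :=
  mul_nonneg (one_sub_exp_neg_nonneg (by positivity)) (rpow_nonneg hs.le β)

lemma one_sub_exp_neg_mul_mul_rpow_le_mul_rpow_add_one (hs : 0 < s) (β : ℝ) :
    (1 - exp (-(c * s))) * s ^ β ≤ c * s ^ (β + 1) :=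
  calc (1 - exp (-(c * s))) * s ^ β ≤ c * s * s ^ β :=
        mul_le_mul_of_nonneg_right (one_sub_exp_neg_le_self _) (rpow_nonneg hs.le β)
    _ = c * s ^ (β + 1) := by rw [rpow_add_one hs.ne']; ring

lemma one_sub_exp_neg_mul_mul_rpow_le_rpow (hs : 0 < s) (β : ℝ) :
    (1 - exp (-(c * s))) * s ^ β ≤ s ^ β :=
  mul_le_of_le_one_left (rpow_nonneg hs.le β) (one_sub_exp_neg_le_one _)

variable {α : ℝ}

lemma integrableOn_one_sub_exp_neg_mul_mul_rpow (hα : 0 < α) (hα1 : α < 1) (hc : 0 ≤ c) :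
    IntegrableOn (fun s => (1 - exp (-(c * s))) * s ^ (-α - 1)) (Ioi 0) := by
  have hcont : ContinuousOn (fun s => (1 - exp (-(c * s))) * s ^ (-α - 1)) (Ioi 0) :=
    fun s hs =>
      ((continuous_const.sub (continuous_const.mul continuous_id).neg.rexp).continuousAt.mul
        (continuousAt_rpow_const s _ (Or.inl (ne_of_gt hs)))).continuousWithinAt
  rw [← Ioc_union_Ioi_eq_Ioi zero_le_one, integrableOn_union]
  constructor
  · have hpow : IntegrableOn (fun s : ℝ => s ^ (-α)) (Ioc 0 1) :=
      (intervalIntegrable_iff_integrableOn_Ioc_of_le zero_le_one).mp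
        (intervalIntegral.intervalIntegrable_rpow' (r := -α) (by linarith))
    refine (hpow.const_mul c).mono' ((hcont.mono Ioc_subset_Ioi_self).aestronglyMeasurable
      measurableSet_Ioc) ((ae_restrict_iff' measurableSet_Ioc).2 (ae_of_all _ fun s hs => ?_))
    rw [norm_of_nonneg (one_sub_exp_neg_mul_mul_rpow_nonneg hc hs.1 _)]
    simpa using one_sub_exp_neg_mul_mul_rpow_le_mul_rpow_add_one (c := c) hs.1 (-α - 1)
  · refine (integrableOn_Ioi_rpow_of_lt (a := -α - 1) (by linarith) one_pos).mono'
      ((hcont.mono (Ioi_subset_Ioi zero_le_one)).aestronglyMeasurable measurableSet_Ioi)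
      ((ae_restrict_iff' measurableSet_Ioi).2 (ae_of_all _ fun s (hs : 1 < s) => ?_))
    rw [norm_of_nonneg (one_sub_exp_neg_mul_mul_rpow_nonneg hc (by linarith) _)]
    exact one_sub_exp_neg_mul_mul_rpow_le_rpow (by linarith) _


lemma tendsto_one_sub_exp_neg_mul_mul_rpow_nhdsGT_zero (hα1 : α < 1) (hc : 0 ≤ c) :
    Tendsto (fun s => (1 - exp (-(c * s))) * s ^ (-α)) (𝓝[>] 0) (𝓝 0) := by
  have hlim : Tendsto (fun s : ℝ => c * s ^ (-α + 1)) (𝓝[>] 0) (𝓝 0) := by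
    have h := ((continuousAt_rpow_const 0 (-α + 1) (Or.inr (by linarith))).tendsto.const_mul c)
    rw [zero_rpow (by linarith), mul_zero] at h
    exact h.mono_left nhdsWithin_le_nhds
  exact tendsto_of_tendsto_of_tendsto_of_le_of_le' tendsto_const_nhds hlim
    (eventually_mem_nhdsWithin.mono fun _ hs => one_sub_exp_neg_mul_mul_rpow_nonneg hc hs _)
    (eventually_mem_nhdsWithin.mono fun _ hs =>
      one_sub_exp_neg_mul_mul_rpow_le_mul_rpow_add_one hs _)

lemma tendsto_one_sub_exp_neg_mul_mul_rpow_atTop (hα : 0 < α) (hc : 0 ≤ c) :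
    Tendsto (fun s => (1 - exp (-(c * s))) * s ^ (-α)) atTop (𝓝 0) :=
  tendsto_of_tendsto_of_tendsto_of_le_of_le' tendsto_const_nhds (tendsto_rpow_neg_atTop hα)
    ((eventually_gt_atTop 0).mono fun _ hs => one_sub_exp_neg_mul_mul_rpow_nonneg hc hs _)
    ((eventually_gt_atTop 0).mono fun _ hs => one_sub_exp_neg_mul_mul_rpow_le_rpow hs _)

theorem integral_one_sub_exp_neg_mul_mul_rpow (hα : 0 < α) (hα1 : α < 1) (hc : 0 < c) :
    ∫ s in Ioi 0, (1 - exp (-(c * s))) * s ^ (-α - 1) = Gamma (1 - α) * c ^ α / α := by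
  have hu : ∀ s ∈ Ioi (0 : ℝ),
      HasDerivAt (fun s => 1 - exp (-(c * s))) (c * exp (-(c * s))) s := fun s _ => by
    simpa [mul_comm] using (((hasDerivAt_id s).const_mul c).neg.exp).const_sub 1
  have hv : ∀ s ∈ Ioi (0 : ℝ), HasDerivAt (fun s => s ^ (-α)) (-α * s ^ (-α - 1)) s :=
    fun s hs => hasDerivAt_rpow_const (Or.inl (ne_of_gt hs))
  have hGamma : ∫ s in Ioi 0, s ^ (-α) * exp (-(c * s)) = (1 / c) ^ (1 - α) * Gamma (1 - α) := by
    simpa using integral_rpow_mul_exp_neg_mul_Ioi (a := 1 - α) (by linarith) hc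
  have hGamma_int : IntegrableOn (fun s => s ^ (-α) * exp (-(c * s))) (Ioi 0) :=
    .of_integral_ne_zero (by rw [hGamma]; have := Gamma_pos_of_pos (sub_pos.2 hα1); positivity)
  have huv' : IntegrableOn (fun s => (1 - exp (-(c * s))) * (-α * s ^ (-α - 1))) (Ioi 0) := by
    simp only [mul_left_comm _ (-α)]
    exact (integrableOn_one_sub_exp_neg_mul_mul_rpow hα hα1 hc.le).const_mul (-α)
  have hu'v : IntegrableOn (fun s => c * exp (-(c * s)) * s ^ (-α)) (Ioi 0) := by
    simp only [mul_assoc, mul_comm (exp _)]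
    exact hGamma_int.const_mul c
  have hibp := integral_Ioi_mul_deriv_eq_deriv_mul hu hv huv' hu'v
    (tendsto_one_sub_exp_neg_mul_mul_rpow_nhdsGT_zero hα1 hc.le)
    (tendsto_one_sub_exp_neg_mul_mul_rpow_atTop hα hc.le)
  simp only [mul_left_comm _ (-α), mul_assoc c, mul_comm (exp _), integral_const_mul,
    hGamma] at hibp
  have hscale : c * (1 / c) ^ (1 - α) = c ^ α := by
    rw [one_div, inv_rpow hc.le, ← rpow_neg hc.le, neg_sub, rpow_sub_one hc.ne']
    field_simp
  rw [← mul_assoc, hscale] at hibp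
  field_simp
  linarith

end TemperedStable

/-- For the Lévy measure ν(ds) = (α/Γ(1-α)) s^{-α-1} e^{-θ s} ds on (0,∞), with
0 < α < 1 and θ > 0, the associated Bernšteĭn function is f(x) = (x+θ)^α - θ^α. -/
theorem bernstein_tempered (α θ x : ℝ) (hα : 0 < α) (hα1 : α < 1) (hθ : 0 < θ)
    (hx : 0 ≤ x) :
    ∫ s in Set.Ioi (0:ℝ),
        (1 - Real.exp (-s * x)) * (α / Real.Gamma (1 - α) * s ^ (-α - 1) * Real.exp (-θ * s))
      = (x + θ) ^ α - θ ^ α := by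
  have hxθ : 0 < x + θ := by linarith
  have hsplit : ∀ s ∈ Ioi (0 : ℝ),
      (1 - exp (-s * x)) * (α / Gamma (1 - α) * s ^ (-α - 1) * exp (-θ * s))
        = α / Gamma (1 - α) * ((1 - exp (-((x + θ) * s))) * s ^ (-α - 1)
          - (1 - exp (-(θ * s))) * s ^ (-α - 1)) := fun s _ => by
    rw [show -((x + θ) * s) = -s * x + -(θ * s) by ring, exp_add, neg_mul θ]
    ring
  rw [setIntegral_congr_fun measurableSet_Ioi hsplit, integral_const_mul,
    integral_sub (integrableOn_one_sub_exp_neg_mul_mul_rpow hα hα1 hxθ.le)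
      (integrableOn_one_sub_exp_neg_mul_mul_rpow hα hα1 hθ.le),
    integral_one_sub_exp_neg_mul_mul_rpow hα hα1 hxθ,
    integral_one_sub_exp_neg_mul_mul_rpow hα hα1 hθ]
  have hGamma := (Gamma_pos_of_pos (sub_pos.2 hα1)).ne'
  field_simp
end

section
/- Let λ > 0 and f a Bernšteĭn function with Lévy measure ν so that f(λ) = ∫_0^∞ (1-e^{-λs}) ν(ds) and ∫_0^∞ e^{-λs} s^m ν(ds) < ∞ for all m ≥ 1. If p_k(t) = ((-1)^k/k!) d^k/du^k [e^{-t f(λ u)}]|_{u=1} for k ≥ 0, then for each k and t > 0, d/dt p_k(t) = -f(λ) p_k(t) + Σ_{m=1}^{k} (λ^m/m!) p_{k-m}(t) ∫_0^∞ e^{-λ s} s^m ν(ds). -/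
/-!
With `h u = -f (λ u)` and `ψ t u = exp (t h u)` we have `p k t = (-1)^k/k! ∂ᵤᵏ ψ t 1`.
Differentiating in `t` commutes with `∂ᵤᵏ`, so `∂ₜ ∂ᵤᵏ ψ = ∂ᵤᵏ (h ψ)`; this is proved by induction
on `k` for all products `a ψ` at once, using `∂ᵤ (a ψ) = (a' + t a h') ψ`. Leibniz's rule expands
`∂ᵤᵏ (h ψ)` at `u = 1` through the Taylor coefficients of `h`, and differentiation under the
integral sign gives `h⁽ᵐ⁾ 1 = (-1)^m λ^m ∫ e^{-λs} s^m ν(ds)` for `m ≥ 1`.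
-/

open MeasureTheory Set Filter Topology Metric
open scoped ContDiff

theorem neg_one_pow_div_factorial_mul_choose {i k : ℕ} (hik : i ≤ k) :
    (-1 : ℝ) ^ k / k.factorial * k.choose i =
      (-1) ^ i / i.factorial * ((-1) ^ (k - i) / (k - i).factorial) := by
  rw [Nat.cast_choose ℝ hik, ← pow_mul_pow_sub (-1 : ℝ) hik]
  field_simp

theorem neg_one_pow_div_factorial_mul_iteratedDeriv_mul {k : ℕ} {g φ : ℝ → ℝ} {x : ℝ}
    (hg : ContDiffAt ℝ k g x) (hφ : ContDiffAt ℝ k φ x) :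
    (-1 : ℝ) ^ k / k.factorial * iteratedDeriv k (fun y => g y * φ y) x =
      ∑ i ∈ Finset.range (k + 1), (-1) ^ i / i.factorial * iteratedDeriv i g x *
        ((-1) ^ (k - i) / (k - i).factorial * iteratedDeriv (k - i) φ x) := by
  rw [iteratedDeriv_fun_mul hg hφ, Finset.mul_sum]
  refine Finset.sum_congr rfl fun i hi => ?_
  rw [← mul_assoc, ← mul_assoc, neg_one_pow_div_factorial_mul_choose
    (Finset.mem_range_succ_iff.1 hi)]
  ring

section DerivSeq

variable {F : ℕ → ℝ → ℝ} {U : Set ℝ}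

theorem iteratedDeriv_eqOn_of_hasDerivAt_succ (hU : IsOpen U)
    (hF : ∀ n, ∀ x ∈ U, HasDerivAt (F n) (F (n + 1) x) x) (n : ℕ) :
    EqOn (iteratedDeriv n (F 0)) (F n) U := by
  induction n with
  | zero => intro x _; rfl
  | succ n ih =>
    intro x hx
    rw [iteratedDeriv_succ, (ih.eventuallyEq_of_mem (hU.mem_nhds hx)).deriv_eq]
    exact (hF n x hx).deriv

theorem contDiffOn_of_hasDerivAt_succ (hU : IsOpen U)
    (hF : ∀ n, ∀ x ∈ U, HasDerivAt (F n) (F (n + 1) x) x) : ContDiffOn ℝ ∞ (F 0) U := by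
  refine contDiffOn_of_differentiableOn_deriv fun n _ => ?_
  refine DifferentiableOn.congr (fun x hx => (hF n x hx).differentiableAt.differentiableWithinAt)
    fun x hx => ?_
  rw [iteratedDerivWithin_of_isOpen hU hx, iteratedDeriv_eqOn_of_hasDerivAt_succ hU hF n hx]

end DerivSeq

section ExpMul

variable {U : Set ℝ} {h : ℝ → ℝ} {u : ℝ}

theorem iteratedDeriv_succ_mul_exp_mul (hU : IsOpen U) (hh : ContDiffOn ℝ ∞ h U)
    {a : ℝ → ℝ} (ha : ContDiffOn ℝ ∞ a U) (k : ℕ) (hu : u ∈ U) (τ : ℝ) :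
    iteratedDeriv (k + 1) (fun v => a v * Real.exp (τ * h v)) u =
      iteratedDeriv k (fun v => deriv a v * Real.exp (τ * h v)) u +
        τ * iteratedDeriv k (fun v => a v * deriv h v * Real.exp (τ * h v)) u := by
  have hE : ContDiffOn ℝ ∞ (fun v => Real.exp (τ * h v)) U := (contDiffOn_const.mul hh).exp
  have hderiv : EqOn (deriv fun v => a v * Real.exp (τ * h v))
      (fun v => deriv a v * Real.exp (τ * h v) +
        τ * (a v * deriv h v * Real.exp (τ * h v))) U := by
    intro v hv
    have hav := (ha.differentiableOn (by simp) v hv).differentiableAt (hU.mem_nhds hv)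
    have hhv := (hh.differentiableOn (by simp) v hv).differentiableAt (hU.mem_nhds hv)
    refine (hav.hasDerivAt.mul (hhv.hasDerivAt.const_mul τ).exp).deriv.trans ?_
    ring
  have h₁ := ((ha.deriv_of_isOpen hU le_rfl).mul hE).contDiffAt (hU.mem_nhds hu)
  have h₂ := ((ha.mul (hh.deriv_of_isOpen hU le_rfl)).mul hE).contDiffAt (hU.mem_nhds hu)
  rw [iteratedDeriv_succ', hderiv.iteratedDeriv_of_isOpen hU k hu,
    iteratedDeriv_fun_add (h₁.of_le (by exact_mod_cast le_top))
      ((contDiffAt_const.mul h₂).of_le (by exact_mod_cast le_top)),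
    iteratedDeriv_const_mul_field]

theorem hasDerivAt_iteratedDeriv_mul_exp_mul (hU : IsOpen U) (hh : ContDiffOn ℝ ∞ h U)
    (hu : u ∈ U) (k : ℕ) {a : ℝ → ℝ} (ha : ContDiffOn ℝ ∞ a U) (t : ℝ) :
    HasDerivAt (fun τ => iteratedDeriv k (fun v => a v * Real.exp (τ * h v)) u)
      (iteratedDeriv k (fun v => a v * h v * Real.exp (t * h v)) u) t := by
  induction k generalizing a with
  | zero =>
    simp only [iteratedDeriv_zero]
    exact ((hasDerivAt_mul_const (h u)).exp.const_mul (a u)).congr_deriv (by ring)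
  | succ k ih =>
    have hda : ContDiffOn ℝ ∞ (deriv a) U := ha.deriv_of_isOpen hU le_rfl
    have hdh : ContDiffOn ℝ ∞ (deriv h) U := hh.deriv_of_isOpen hU le_rfl
    simp_rw [iteratedDeriv_succ_mul_exp_mul hU hh ha k hu]
    refine ((ih hda).fun_add ((hasDerivAt_id' t).fun_mul (ih (ha.mul hdh)))).congr_deriv ?_
    have hE : ContDiffOn ℝ ∞ (fun v => Real.exp (t * h v)) U := (contDiffOn_const.mul hh).exp
    have hprod : EqOn (fun v => deriv (fun w => a w * h w) v * Real.exp (t * h v))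
        (fun v => deriv a v * h v * Real.exp (t * h v) +
          a v * deriv h v * Real.exp (t * h v)) U := by
      intro v hv
      have hav := (ha.differentiableOn (by simp) v hv).differentiableAt (hU.mem_nhds hv)
      have hhv := (hh.differentiableOn (by simp) v hv).differentiableAt (hU.mem_nhds hv)
      dsimp only
      rw [(hav.hasDerivAt.fun_mul hhv.hasDerivAt).deriv]
      ring
    have h₁ := ((hda.mul hh).mul hE).contDiffAt (hU.mem_nhds hu)
    have h₂ := ((ha.mul hdh).mul hE).contDiffAt (hU.mem_nhds hu)
    rw [iteratedDeriv_succ_mul_exp_mul hU hh (ha.mul hh) k hu,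
      hprod.iteratedDeriv_of_isOpen hU k hu,
      iteratedDeriv_fun_add (h₁.of_le (by exact_mod_cast le_top))
        (h₂.of_le (by exact_mod_cast le_top))]
    simp only [mul_right_comm _ (h _) (deriv h _)]
    ring

theorem hasDerivAt_iteratedDeriv_exp_mul (hU : IsOpen U) (hh : ContDiffOn ℝ ∞ h U)
    (hu : u ∈ U) (k : ℕ) (t : ℝ) :
    HasDerivAt (fun τ => iteratedDeriv k (fun v => Real.exp (τ * h v)) u)
      (iteratedDeriv k (fun v => h v * Real.exp (t * h v)) u) t := by
  simpa only [one_mul] using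
    hasDerivAt_iteratedDeriv_mul_exp_mul hU hh hu k (a := fun _ => 1) contDiffOn_const t

end ExpMul

noncomputable def laplaceMoment (ν : Measure ℝ) (m : ℕ) (x : ℝ) : ℝ :=
  ∫ s in Ioi 0, Real.exp (-x * s) * s ^ m ∂ν

theorem exp_neg_mul_mul_pow_le {x s : ℝ} (hx : 0 < x) (hs : 0 < s) {m : ℕ} (hm : 1 ≤ m) :
    Real.exp (-x * s) * s ^ m ≤ (m.factorial / x ^ m + 1) * min s 1 := by
  have hC : 0 ≤ (m.factorial : ℝ) / x ^ m := by positivity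
  rcases le_total s 1 with hs1 | hs1
  · have hexp : Real.exp (-x * s) ≤ 1 := Real.exp_le_one_iff.2 (by nlinarith)
    calc Real.exp (-x * s) * s ^ m ≤ 1 * s := by
          gcongr
          exact pow_le_of_le_one hs.le hs1 (by omega)
      _ ≤ (m.factorial / x ^ m + 1) * min s 1 := by rw [min_eq_left hs1]; nlinarith
  · have hpow : (x * s) ^ m / m.factorial ≤ Real.exp (x * s) :=
      Real.pow_div_factorial_le_exp (x * s) (mul_pos hx hs).le m
    have key : Real.exp (-x * s) * s ^ m ≤ m.factorial / x ^ m := by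
      rw [neg_mul, Real.exp_neg, inv_mul_eq_div, div_le_div_iff₀ (Real.exp_pos _) (by positivity)]
      rw [div_le_iff₀ (by positivity), mul_pow] at hpow
      linarith
    rw [min_eq_right hs1]
    linarith

section Levy

variable {ν : Measure ℝ} (hν : ∫⁻ s in Ioi (0:ℝ), ENNReal.ofReal (min s 1) ∂ν < ⊤)
include hν

theorem integrableOn_min_one : IntegrableOn (fun s => min s 1) (Ioi 0) ν := by
  refine ⟨(continuous_id.min continuous_const).aestronglyMeasurable, ?_⟩
  rw [hasFiniteIntegral_iff_ofReal]
  · exact hν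
  · filter_upwards [ae_restrict_mem measurableSet_Ioi] with s (hs : 0 < s)
    positivity

theorem integrableOn_exp_neg_mul_mul_pow {x : ℝ} (hx : 0 < x) {m : ℕ} (hm : 1 ≤ m) :
    IntegrableOn (fun s => Real.exp (-x * s) * s ^ m) (Ioi 0) ν := by
  refine ((integrableOn_min_one hν).const_mul (m.factorial / x ^ m + 1)).mono' (by fun_prop) ?_
  filter_upwards [ae_restrict_mem measurableSet_Ioi] with s (hs : 0 < s)
  rw [Real.norm_of_nonneg (by positivity)]
  exact exp_neg_mul_mul_pow_le hx hs hm

theorem integrableOn_one_sub_exp_neg_mul {x : ℝ} (hx : 0 ≤ x) :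
    IntegrableOn (fun s => 1 - Real.exp (-x * s)) (Ioi 0) ν := by
  refine ((integrableOn_min_one hν).const_mul (x + 1)).mono' (by fun_prop) ?_
  filter_upwards [ae_restrict_mem measurableSet_Ioi] with s (hs : 0 < s)
  have hexp : Real.exp (-x * s) ≤ 1 := Real.exp_le_one_iff.2 (by nlinarith)
  rw [Real.norm_of_nonneg (by linarith)]
  rcases le_total s 1 with hs1 | hs1
  · have := Real.add_one_le_exp (-x * s)
    rw [min_eq_left hs1]
    nlinarith
  · rw [min_eq_right hs1]
    linarith [Real.exp_pos (-x * s)]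

/-- With `c = 1, m = 0` this differentiates `f`; with `c = 0`, minus `laplaceMoment ν m`. -/
theorem hasDerivAt_integral_sub_exp_neg_mul_mul_pow (c : ℝ) (m : ℕ) {x : ℝ} (hx : 0 < x)
    (hint : IntegrableOn (fun s => (c - Real.exp (-x * s)) * s ^ m) (Ioi 0) ν) :
    HasDerivAt (fun y => ∫ s in Ioi 0, (c - Real.exp (-y * s)) * s ^ m ∂ν)
      (laplaceMoment ν (m + 1) x) x := by
  have hx2 : 0 < x / 2 := half_pos hx
  refine (hasDerivAt_integral_of_dominated_loc_of_deriv_le (ball_mem_nhds x hx2)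
    (F := fun y s => (c - Real.exp (-y * s)) * s ^ m)
    (F' := fun y s => Real.exp (-y * s) * s ^ (m + 1)) (μ := ν.restrict (Ioi 0))
    (Eventually.of_forall fun y => by fun_prop) hint (by fun_prop) ?_
    ((integrableOn_min_one hν).const_mul ((m + 1).factorial / (x / 2) ^ (m + 1) + 1)) ?_).2
  · filter_upwards [ae_restrict_mem measurableSet_Ioi] with s (hs : 0 < s) y hy
    have hy : x / 2 < y := by
      rw [mem_ball, Real.dist_eq, abs_sub_lt_iff] at hy
      linarith
    rw [Real.norm_of_nonneg (by positivity)]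
    calc Real.exp (-y * s) * s ^ (m + 1) ≤ Real.exp (-(x / 2) * s) * s ^ (m + 1) := by
          gcongr
      _ ≤ _ := exp_neg_mul_mul_pow_le hx2 hs (by omega)
  · filter_upwards with s y _
    exact (((hasDerivAt_neg y).mul_const s).exp.const_sub c).mul_const _ |>.congr_deriv
      (by ring)

end Levy

noncomputable def bernsteinDeriv (ν : Measure ℝ) (f : ℝ → ℝ) : ℕ → ℝ → ℝ
  | 0 => f
  | n + 1 => fun x => (-1) ^ n * laplaceMoment ν (n + 1) x

section Bernstein

variable {ν : Measure ℝ} (hν : ∫⁻ s in Ioi (0:ℝ), ENNReal.ofReal (min s 1) ∂ν < ⊤)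
  {f : ℝ → ℝ} (hf : ∀ x : ℝ, 0 ≤ x → f x = ∫ s in Ioi (0:ℝ), (1 - Real.exp (-x * s)) ∂ν)
include hν hf

theorem hasDerivAt_bernsteinDeriv (n : ℕ) {x : ℝ} (hx : 0 < x) :
    HasDerivAt (bernsteinDeriv ν f n) (bernsteinDeriv ν f (n + 1) x) x := by
  cases n with
  | zero =>
    have hf' : f =ᶠ[𝓝 x] fun y => ∫ s in Ioi 0, (1 - Real.exp (-y * s)) * s ^ 0 ∂ν := by
      filter_upwards [Ioi_mem_nhds hx] with y (hy : 0 < y)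
      simp only [pow_zero, mul_one, hf y hy.le]
    have hint : IntegrableOn (fun s => (1 - Real.exp (-x * s)) * s ^ 0) (Ioi 0) ν := by
      simpa only [pow_zero, mul_one] using integrableOn_one_sub_exp_neg_mul hν hx.le
    simpa [bernsteinDeriv, laplaceMoment] using
      (hasDerivAt_integral_sub_exp_neg_mul_mul_pow hν 1 0 hx hint).congr_of_eventuallyEq hf'
  | succ n =>
    have hL : laplaceMoment ν (n + 1) =
        fun y => -∫ s in Ioi 0, (0 - Real.exp (-y * s)) * s ^ (n + 1) ∂ν := by
      ext y
      simp only [laplaceMoment, zero_sub, neg_mul, integral_neg, neg_neg]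
    have hint : IntegrableOn (fun s => (0 - Real.exp (-x * s)) * s ^ (n + 1)) (Ioi 0) ν := by
      simpa only [zero_sub, neg_mul] using
        (integrableOn_exp_neg_mul_mul_pow hν hx (m := n + 1) (by omega)).fun_neg
    have := (hasDerivAt_integral_sub_exp_neg_mul_mul_pow hν 0 (n + 1) hx hint).neg.const_mul
      ((-1 : ℝ) ^ n)
    simp only [bernsteinDeriv, hL]
    exact this.congr_deriv (by ring)

variable {lam : ℝ} (hlam : 0 < lam)
include hlam

theorem hasDerivAt_neg_bernsteinDeriv_comp_mul (n : ℕ) {u : ℝ} (hu : 0 < u) :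
    HasDerivAt (fun v => -(lam ^ n * bernsteinDeriv ν f n (lam * v)))
      (-(lam ^ (n + 1) * bernsteinDeriv ν f (n + 1) (lam * u))) u := by
  have := ((hasDerivAt_bernsteinDeriv hν hf n (mul_pos hlam hu)).comp u
    ((hasDerivAt_id u).const_mul lam)).const_mul (lam ^ n) |>.neg
  exact this.congr_deriv (by simp only [mul_one, pow_succ]; ring)

theorem contDiffOn_neg_comp_mul : ContDiffOn ℝ ∞ (fun u => -f (lam * u)) (Ioi 0) := by
  simpa [bernsteinDeriv] using contDiffOn_of_hasDerivAt_succ isOpen_Ioi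
    (hasDerivAt_neg_bernsteinDeriv_comp_mul hν hf hlam)

theorem neg_one_pow_div_factorial_mul_iteratedDeriv_neg_comp_mul (n : ℕ) :
    (-1 : ℝ) ^ (n + 1) / (n + 1).factorial *
        iteratedDeriv (n + 1) (fun u => -f (lam * u)) 1 =
      lam ^ (n + 1) / (n + 1).factorial * laplaceMoment ν (n + 1) lam := by
  have hderiv := iteratedDeriv_eqOn_of_hasDerivAt_succ isOpen_Ioi
    (hasDerivAt_neg_bernsteinDeriv_comp_mul hν hf hlam) (n + 1) (mem_Ioi.2 one_pos)
  have hsign : (-1 : ℝ) ^ (n + 1) * (-1) ^ n = -1 := by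
    rw [← pow_add]
    exact Odd.neg_one_pow ⟨n, by ring⟩
  simp only [bernsteinDeriv, pow_zero, one_mul, mul_one] at hderiv
  rw [hderiv]
  linear_combination
    -(lam ^ (n + 1) / (n + 1).factorial * laplaceMoment ν (n + 1) lam) * hsign

end Bernstein

theorem state_probabilities_equation_general
    (lam : ℝ) (hlam : 0 < lam) (ν : Measure ℝ)
    (hν : ∫⁻ s in Set.Ioi (0:ℝ), ENNReal.ofReal (min s 1) ∂ν < ⊤)
    (f : ℝ → ℝ)
    (hf : ∀ x : ℝ, 0 ≤ x → f x = ∫ s in Set.Ioi (0:ℝ), (1 - Real.exp (-x * s)) ∂ν)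
    (p : ℕ → ℝ → ℝ)
    (hp : ∀ k : ℕ, ∀ t : ℝ,
      p k t = (-1 : ℝ) ^ k / (Nat.factorial k) *
        iteratedDeriv k (fun u => Real.exp (-t * f (lam * u))) 1) :
    ∀ (k : ℕ) (t : ℝ), 0 < t →
      HasDerivAt (fun τ => p k τ)
        (-f lam * p k t +
          ∑ m ∈ Finset.Icc 1 k, lam ^ m / (Nat.factorial m) * p (k - m) t *
            ∫ s in Set.Ioi (0:ℝ), Real.exp (-lam * s) * s ^ m ∂ν) t := by
  intro k t _
  have hh := contDiffOn_neg_comp_mul hν hf hlam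
  have hhk : ContDiffAt ℝ k (fun u => -f (lam * u)) 1 :=
    (hh.contDiffAt (Ioi_mem_nhds one_pos)).of_le (by exact_mod_cast le_top)
  have hp' : ∀ n τ, p n τ =
      (-1) ^ n / n.factorial * iteratedDeriv n (fun u => Real.exp (τ * -f (lam * u))) 1 := by
    simp only [hp, mul_neg, neg_mul, implies_true]
  rw [funext (hp' k)]
  refine ((hasDerivAt_iteratedDeriv_exp_mul isOpen_Ioi hh (mem_Ioi.2 one_pos) k t).const_mul
    _).congr_deriv ?_
  rw [neg_one_pow_div_factorial_mul_iteratedDeriv_mul hhk (contDiffAt_const.mul hhk).exp,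
    Finset.range_eq_Ico, Finset.sum_eq_sum_Ico_succ_bot k.add_one_pos, zero_add,
    Finset.Ico_add_one_right_eq_Icc]
  simp only [← hp']
  congr 1
  · simp
  · refine Finset.sum_congr rfl fun m hm => ?_
    obtain ⟨n, rfl⟩ := Nat.exists_eq_add_one.2 (Finset.mem_Icc.1 hm).1
    rw [neg_one_pow_div_factorial_mul_iteratedDeriv_neg_comp_mul hν hf hlam, laplaceMoment]
    ring

/-- The state probabilities `p k t = ((-1)^k/k!) dᵏ/duᵏ e^{-t f(λ u)} |_{u=1}` of the
subordinated Poisson process solve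
`d/dt p k t = -f(λ) p k t + Σ_{m=1}^k (λ^m/m!) p (k-m) t ∫_0^∞ e^{-λ s} s^m ν(ds)`. -/
theorem state_probabilities_equation
    (lam : ℝ) (hlam : 0 < lam) (ν : Measure ℝ)
    (hν : ∫⁻ s in Set.Ioi (0:ℝ), ENNReal.ofReal (min s 1) ∂ν < ⊤)
    (hint : ∀ m : ℕ, 1 ≤ m →
      IntegrableOn (fun s => Real.exp (-lam * s) * s ^ m) (Set.Ioi 0) ν)
    (f : ℝ → ℝ)
    (hf : ∀ x : ℝ, 0 ≤ x → f x = ∫ s in Set.Ioi (0:ℝ), (1 - Real.exp (-x * s)) ∂ν)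
    (p : ℕ → ℝ → ℝ)
    (hp : ∀ k : ℕ, ∀ t : ℝ,
      p k t = (-1 : ℝ) ^ k / (Nat.factorial k) *
        iteratedDeriv k (fun u => Real.exp (-t * f (lam * u))) 1) :
    ∀ (k : ℕ) (t : ℝ), 0 < t →
      HasDerivAt (fun τ => p k τ)
        (-f lam * p k t +
          ∑ m ∈ Finset.Icc 1 k, lam ^ m / (Nat.factorial m) * p (k - m) t *
            ∫ s in Set.Ioi (0:ℝ), Real.exp (-lam * s) * s ^ m ∂ν) t :=
  state_probabilities_equation_general lam hlam ν hν f hf p hp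
end

section
/- Let N^f(t) = N(H^f(t)) be a Poisson process of rate λ subordinated by an independent subordinator with Laplace exponent f. Then P(N^f(t) = k) = ((-1)^k/k!) (d^k/du^k) e^{-t f(λ u)} evaluated at u = 1, for every integer k ≥ 0. -/
/-! For `u ≥ 0`, `e^{-t f(λu)} = E[e^{u X}]` is the moment generating function of `X = -λ H^f(t)`.
Since `X ≤ 0`, it is finite on `[0, ∞)`, hence smooth on `(0, ∞)` with `k`-th derivative
`E[X^k e^{u X}]`; at `u = 1` this is `(-1)^k k! P(N^f(t) = k)`. -/

open MeasureTheory ProbabilityTheory Filter Topology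

namespace ProbabilityTheory

variable {Ω : Type*} {m : MeasurableSpace Ω} {X : Ω → ℝ} {μ : Measure Ω}

lemma Ici_subset_integrableExpSet_of_nonpos [IsFiniteMeasure μ] (hXm : AEMeasurable X μ)
    (hX : ∀ᵐ ω ∂μ, X ω ≤ 0) : Set.Ici 0 ⊆ integrableExpSet X μ := by
  intro t (ht : 0 ≤ t)
  refine Integrable.of_bound (C := 1)
    (Real.measurable_exp.comp_aemeasurable (hXm.const_mul t)).aestronglyMeasurable ?_
  filter_upwards [hX] with ω hω
  rw [Real.norm_eq_abs, Real.abs_exp, Real.exp_le_one_iff]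
  exact mul_nonpos_of_nonneg_of_nonpos ht hω

lemma mem_interior_integrableExpSet_of_nonpos [IsFiniteMeasure μ] (hXm : AEMeasurable X μ)
    (hX : ∀ᵐ ω ∂μ, X ω ≤ 0) {t : ℝ} (ht : 0 < t) : t ∈ interior (integrableExpSet X μ) :=
  interior_mono (Ici_subset_integrableExpSet_of_nonpos hXm hX) (by rwa [interior_Ici])

end ProbabilityTheory

theorem distribution_subordinated_poisson_general
    (lam t : ℝ) (hlam : 0 < lam)
    (f : ℝ → ℝ) (μt : Measure ℝ) [IsProbabilityMeasure μt]
    (hsupp : μt (Set.Iio 0) = 0)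
    (hlaplace : ∀ x : ℝ, 0 ≤ x → ∫ s, Real.exp (-x * s) ∂μt = Real.exp (-t * f x)) :
    ∀ k : ℕ,
      ∫ s, Real.exp (-lam * s) * (lam * s) ^ k / (Nat.factorial k) ∂μt
        = (-1 : ℝ) ^ k / (Nat.factorial k) *
            iteratedDeriv k (fun u => Real.exp (-t * f (lam * u))) 1 := by
  intro k
  set X : ℝ → ℝ := fun s => -(lam * s)
  have hXm : AEMeasurable X μt := by fun_prop
  have hX : ∀ᵐ s ∂μt, X s ≤ 0 := by
    filter_upwards [measure_eq_zero_iff_ae_notMem.1 hsupp] with s hs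
    simpa [X] using mul_nonneg hlam.le (not_lt.1 hs)
  have hmgf : (fun u => Real.exp (-t * f (lam * u))) =ᶠ[𝓝 1] mgf X μt := by
    filter_upwards [Ioi_mem_nhds one_pos] with u (hu : 0 < u)
    rw [← hlaplace _ (by positivity), mgf]
    congr with s
    simp only [X]
    ring_nf
  have hsign : ∀ s, X s ^ k * Real.exp (1 * X s)
      = (-1) ^ k * (Real.exp (-lam * s) * (lam * s) ^ k) := fun s => by
    simp only [X, neg_pow (lam * s), one_mul, neg_mul]; ring
  rw [hmgf.iteratedDeriv_eq,
    iteratedDeriv_mgf (mem_interior_integrableExpSet_of_nonpos hXm hX one_pos), integral_div]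
  simp_rw [hsign, integral_const_mul]
  rw [div_mul_eq_mul_div, ← mul_assoc, ← pow_add, Even.neg_one_pow ⟨k, rfl⟩, one_mul]

/-- If `μt` is the law of `H^f(t)` with Laplace transform `e^{-t f(·)}`, then
`P(N(H^f(t)) = k) = ∫ e^{-λs}(λs)^k/k! μt(ds) = ((-1)^k/k!) dᵏ/duᵏ e^{-t f(λ u)} |_{u=1}`. -/
theorem distribution_subordinated_poisson
    (lam t : ℝ) (hlam : 0 < lam) (ht : 0 < t)
    (f : ℝ → ℝ) (μt : Measure ℝ) [IsProbabilityMeasure μt]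
    (hsupp : μt (Set.Iio 0) = 0)
    (hlaplace : ∀ x : ℝ, 0 ≤ x → ∫ s, Real.exp (-x * s) ∂μt = Real.exp (-t * f x)) :
    ∀ k : ℕ,
      ∫ s, Real.exp (-lam * s) * (lam * s) ^ k / (Nat.factorial k) ∂μt
        = (-1 : ℝ) ^ k / (Nat.factorial k) *
            iteratedDeriv k (fun u => Real.exp (-t * f (lam * u))) 1 :=
  distribution_subordinated_poisson_general lam t hlam f μt hsupp hlaplace
end

section
/- The probability generating function of the sequence of first-passage time densities satisfies Σ_{k=1}^∞ u^k q_k^f(s) = (u/(1-u)) f(λ(1-u)) e^{-s f(λ(1-u))} for |u| < 1 and s > 0, where q_k^f(s) = (d/ds) ∫_0^∞ P(N(z) ≥ k) P(H^f(s) ∈ dz). -/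
/-!
Write `m_j(σ) = P(N(H(σ)) = j)`. Mixing the Poisson generating function over the law of `H(σ)`
gives `∑ m_j(σ) w^j = exp (-σ f(λ(1-w)))`, so by uniqueness of power series coefficients the
sequences `r(σ) = e^{σ f(λ)} m(σ)` form a convolution semigroup with `r_0 = 1` and nonnegative
entries. Each `r_j`, `j ≥ 1`, is then superadditive, so `r_j(τ)/τ` converges as `τ → 0+` to some
`b_j ≤ r_j(1)`, and the semigroup identity turns this into differentiability with `r' = r * b`.
The derivatives of the `m_j` are therefore bounded uniformly in `σ` by a sequence with radius of
convergence at least one, so the series for `exp (-σ f(λ(1-u)))` may be differentiated termwise.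
Since `q_{k+1} = -∑_{j ≤ k} m_j'`, summing against `u^{k+1}` is a Cauchy product with the
geometric series.
-/

open MeasureTheory Filter Topology Finset Set

theorem eq_zero_of_hasSum_mul_pow_eq_zero {c : ℕ → ℝ} {r : ℝ} (hr : 0 < r)
    (h : ∀ w, |w| < r → HasSum (fun n => c n * w ^ n) 0) : c = 0 := by
  set ρ : NNReal := ⟨r / 2, by positivity⟩
  have hρ : (ρ : ℝ) = r / 2 := rfl
  have hρr : ∀ y : ℝ, |y| ≤ ρ → |y| < r := fun y hy => by rw [hρ] at hy; linarith
  have hps : HasFPowerSeriesOnBall 0 (FormalMultilinearSeries.ofScalars ℝ c) 0 ρ :=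
    { r_le := (FormalMultilinearSeries.ofScalars ℝ c).le_radius_of_tendsto (l := 0) <| by
        simpa [FormalMultilinearSeries.ofScalars_norm, norm_mul, norm_pow] using
          (h ρ (hρr _ (abs_of_nonneg ρ.2).le)).summable.norm.tendsto_atTop_zero
      r_pos := ENNReal.coe_pos.2 (by rw [← NNReal.coe_pos, hρ]; positivity)
      hasSum := fun {y} hy => by
        simpa [FormalMultilinearSeries.ofScalars_apply_eq, mul_comm] using
          h y (hρr y (by
            simp only [Metric.eball_coe, Metric.mem_ball, dist_zero_right, Real.norm_eq_abs] at hy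
            exact hy.le)) }
  exact (FormalMultilinearSeries.ofScalars_series_eq_zero ℝ).1 hps.hasFPowerSeriesAt.eq_zero

theorem sum_range_mul_pow_mul_pow (a b : ℕ → ℝ) (w : ℝ) (n : ℕ) :
    ∑ i ∈ range (n + 1), a i * w ^ i * (b (n - i) * w ^ (n - i))
      = (∑ i ∈ range (n + 1), a i * b (n - i)) * w ^ n := by
  rw [sum_mul]
  refine sum_congr rfl fun i hi => ?_
  rw [← pow_mul_pow_sub w (Nat.lt_succ_iff.1 (mem_range.1 hi))]
  ring

theorem HasSum.cauchyProduct_mul_pow {a b : ℕ → ℝ} {w A B : ℝ}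
    (ha : HasSum (fun n => a n * w ^ n) A) (hb : HasSum (fun n => b n * w ^ n) B)
    (ha' : Summable fun n => ‖a n * w ^ n‖) (hb' : Summable fun n => ‖b n * w ^ n‖) :
    HasSum (fun n => (∑ i ∈ range (n + 1), a i * b (n - i)) * w ^ n) (A * B) := by
  have := hasSum_sum_range_mul_of_summable_norm ha' hb'
  rw [ha.tsum_eq, hb.tsum_eq] at this
  simpa only [sum_range_mul_pow_mul_pow] using this

section Superadditive

variable {g : ℝ → ℝ} (hg0 : ∀ x, 0 < x → 0 ≤ g x)
  (hg : ∀ x y, 0 < x → 0 < y → g x + g y ≤ g (x + y))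

include hg0 hg in
theorem superadditive_monotoneOn : MonotoneOn g (Ioi 0) := by
  intro x hx y _ hxy
  rcases hxy.eq_or_lt with rfl | hlt
  · rfl
  · have := hg x (y - x) hx (by linarith)
    have := hg0 (y - x) (by linarith)
    rw [add_sub_cancel] at *
    linarith

include hg in
theorem superadditive_natCast_mul_le {τ : ℝ} (hτ : 0 < τ) {n : ℕ} (hn : 1 ≤ n) :
    n * g τ ≤ g (n * τ) := by
  induction n, hn using Nat.le_induction with
  | base => simp
  | succ n hn ih =>
    have := hg (n * τ) τ (by positivity) hτ
    push_cast
    rw [add_one_mul, add_one_mul]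
    linarith

include hg0 hg in
theorem superadditive_div_le_div_sub {τ T : ℝ} (hτ : 0 < τ) (hτT : τ < T) :
    g τ / τ ≤ g T / (T - τ) := by
  set n := ⌊T / τ⌋₊
  have hn : 1 ≤ n := Nat.le_floor (by rw [Nat.cast_one, one_le_div hτ]; exact hτT.le)
  have hnτ : (n : ℝ) * τ ≤ T := by
    have := (le_div_iff₀ hτ).1 (Nat.floor_le (div_nonneg (hτ.trans hτT).le hτ.le))
    linarith
  have hnτ' : T - τ < n * τ := by
    have := (div_lt_iff₀ hτ).1 (Nat.lt_floor_add_one (T / τ))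
    linarith
  have hpos : 0 < T - τ := by linarith
  calc g τ / τ = n * g τ / (n * τ) := by field_simp
    _ ≤ g T / (n * τ) := by
        gcongr
        exact (superadditive_natCast_mul_le hg hτ hn).trans
          (superadditive_monotoneOn hg0 hg (mem_Ioi.2 (by positivity)) (hτ.trans hτT) hnτ)
    _ ≤ g T / (T - τ) := by
        gcongr
        exact hg0 T (hτ.trans hτT)

include hg0 hg in
theorem superadditive_exists_tendsto_div :
    ∃ b, 0 ≤ b ∧ b ≤ g 1 ∧ Tendsto (fun τ => g τ / τ) (𝓝[>] 0) (𝓝 b) := by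
  set S := (fun T => g T / T) '' Ioi 0
  have hS : S.Nonempty := ⟨_, mem_image_of_mem _ (mem_Ioi.2 one_pos)⟩
  have hS0 : ∀ y ∈ S, 0 ≤ y := by
    rintro _ ⟨T, hT, rfl⟩
    exact div_nonneg (hg0 T hT) (le_of_lt hT)
  have hbdd : BddBelow S := ⟨0, hS0⟩
  refine ⟨sInf S, le_csInf hS hS0, by simpa using csInf_le hbdd (mem_image_of_mem _
    (mem_Ioi.2 one_pos)), tendsto_order.2 ⟨fun x hx => ?_, fun x hx => ?_⟩⟩
  · filter_upwards [self_mem_nhdsWithin] with τ hτ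
    exact hx.trans_le (csInf_le hbdd (mem_image_of_mem _ hτ))
  · obtain ⟨_, ⟨T, hT, rfl⟩, hTx⟩ := exists_lt_of_csInf_lt hS hx
    have hT' : (0 : ℝ) < T := hT
    have hlim : Tendsto (fun τ => g T / (T - τ)) (𝓝 0) (𝓝 (g T / (T - 0))) :=
      tendsto_const_nhds.div (tendsto_const_nhds.sub tendsto_id) (by simpa using hT'.ne')
    rw [sub_zero] at hlim
    filter_upwards [nhdsWithin_le_nhds (hlim.eventually (gt_mem_nhds hTx)),
      Ioo_mem_nhdsGT hT'] with τ hτx hτ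
    exact (superadditive_div_le_div_sub hg0 hg hτ.1 hτ.2).trans_lt hτx

end Superadditive

/-- The coefficients of power series `P_σ = ∑ r j σ X^j`, `σ > 0`, with `P_{σ+τ} = P_σ P_τ` and
constant term `1`. -/
structure IsConvSemigroup (r : ℕ → ℝ → ℝ) : Prop where
  zero : ∀ σ, 0 < σ → r 0 σ = 1
  add : ∀ σ τ, 0 < σ → 0 < τ → ∀ j, r j (σ + τ) = ∑ i ∈ range (j + 1), r i σ * r (j - i) τ

namespace IsConvSemigroup

variable {r : ℕ → ℝ → ℝ} (hr : IsConvSemigroup r)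

include hr in
theorem add_eq {σ τ : ℝ} (hσ : 0 < σ) (hτ : 0 < τ) (j : ℕ) :
    r j (σ + τ) = r j σ + ∑ i ∈ range j, r i σ * r (j - i) τ := by
  rw [hr.add σ τ hσ hτ, sum_range_succ, Nat.sub_self, hr.zero τ hτ, mul_one, add_comm]

include hr in
theorem superadditive (hnn : ∀ j σ, 0 < σ → 0 ≤ r j σ) {j : ℕ} (hj : 1 ≤ j)
    (σ τ : ℝ) (hσ : 0 < σ) (hτ : 0 < τ) : r j σ + r j τ ≤ r j (σ + τ) := by
  rw [hr.add_eq hσ hτ]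
  have := single_le_sum (f := fun i => r i σ * r (j - i) τ)
    (fun i _ => mul_nonneg (hnn i σ hσ) (hnn _ τ hτ)) (mem_range.2 hj)
  simpa [hr.zero σ hσ] using this

include hr in
/-- Both one-sided difference quotients at `σ` come from the semigroup identity at the smaller of
the two points. -/
theorem slope_eq {j : ℕ} {σ x : ℝ} (hσ : 0 < σ) (hx : 0 < x) (hxσ : x ≠ σ) :
    slope (r j) σ x = ∑ i ∈ range j, r i (min x σ) * (r (j - i) |x - σ| / |x - σ|) := by
  simp only [slope_def_field, mul_div_assoc', ← sum_div]
  rcases hxσ.lt_or_gt with hlt | hgt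
  · have := hr.add_eq hx (sub_pos.2 hlt) j
    rw [add_sub_cancel] at this
    rw [min_eq_left hlt.le, abs_of_neg (sub_neg.2 hlt), neg_sub, this,
      div_eq_div_iff (sub_ne_zero.2 hxσ) (sub_ne_zero.2 hlt.ne')]
    ring
  · have := hr.add_eq hσ (sub_pos.2 hgt) j
    rw [add_sub_cancel] at this
    rw [min_eq_right hgt.le, abs_of_pos (sub_pos.2 hgt), this, add_sub_cancel_left]

include hr in
theorem hasDerivAt {b : ℕ → ℝ} (hb0 : b 0 = 0)
    (hb : ∀ l, 1 ≤ l → Tendsto (fun τ => r l τ / τ) (𝓝[>] 0) (𝓝 (b l))) (j : ℕ) {σ : ℝ}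
    (hσ : 0 < σ) : HasDerivAt (r j) (∑ i ∈ range (j + 1), r i σ * b (j - i)) σ := by
  induction j using Nat.strong_induction_on with
  | _ j ih =>
  rw [sum_range_succ, Nat.sub_self, hb0, mul_zero, add_zero, hasDerivAt_iff_tendsto_slope]
  have hmin : Tendsto (fun x => min x σ) (𝓝[≠] σ) (𝓝 σ) :=
    tendsto_nhdsWithin_of_tendsto_nhds
      ((continuous_id.min continuous_const).tendsto' σ σ (min_self σ))
  have habs : Tendsto (fun x => |x - σ|) (𝓝[≠] σ) (𝓝[>] 0) := by
    refine tendsto_nhdsWithin_of_tendsto_nhds_of_eventually_within _ ?_ ?_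
    · exact tendsto_nhdsWithin_of_tendsto_nhds
        ((continuous_id.sub continuous_const).abs.tendsto' σ 0 (by simp))
    · filter_upwards [self_mem_nhdsWithin] with x hx
      exact abs_pos.2 (sub_ne_zero.2 hx)
  refine Tendsto.congr' ?_ (tendsto_finsetSum
    (f := fun i x => r i (min x σ) * (r (j - i) |x - σ| / |x - σ|)) _ fun i hi => ?_)
  · filter_upwards [self_mem_nhdsWithin, nhdsWithin_le_nhds (Ioi_mem_nhds hσ)] with x hx hx0
    exact (hr.slope_eq hσ hx0 hx).symm
  · have hi := mem_range.1 hi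
    exact ((ih i hi).continuousAt.tendsto.comp hmin).mul ((hb (j - i) (by omega)).comp habs)

include hr in
theorem exists_hasDerivAt (hnn : ∀ j σ, 0 < σ → 0 ≤ r j σ) :
    ∃ b : ℕ → ℝ, (∀ l, 0 ≤ b l ∧ b l ≤ r l 1) ∧
      ∀ j σ, 0 < σ → HasDerivAt (r j) (∑ i ∈ range (j + 1), r i σ * b (j - i)) σ := by
  have hrate : ∀ l, ∃ β, 0 ≤ β ∧ β ≤ r l 1 ∧ (l = 0 → β = 0) ∧
      (1 ≤ l → Tendsto (fun τ => r l τ / τ) (𝓝[>] 0) (𝓝 β)) := by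
    intro l
    rcases Nat.eq_zero_or_pos l with rfl | hl
    · exact ⟨0, le_rfl, by rw [hr.zero 1 one_pos]; exact zero_le_one, fun _ => rfl, by omega⟩
    · obtain ⟨β, hβ0, hβ1, hβ⟩ :=
        superadditive_exists_tendsto_div (hnn l) (hr.superadditive hnn hl)
      exact ⟨β, hβ0, hβ1, by omega, fun _ => hβ⟩
  choose b hb0 hb1 hbzero hb using hrate
  exact ⟨b, fun l => ⟨hb0 l, hb1 l⟩, fun j σ hσ => hr.hasDerivAt (hbzero 0 rfl) hb j hσ⟩

end IsConvSemigroup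

/-- `P(N(z) = j)` for a Poisson process `N` of rate `lam`. -/
noncomputable def poissonWeight (lam z : ℝ) (j : ℕ) : ℝ :=
  Real.exp (-lam * z) * (lam * z) ^ j / j.factorial

section PoissonWeight

variable {lam z : ℝ}

theorem poissonWeight_nonneg (h : 0 ≤ lam * z) (j : ℕ) : 0 ≤ poissonWeight lam z j := by
  unfold poissonWeight; positivity

theorem poissonWeight_le_one (h : 0 ≤ lam * z) (j : ℕ) : poissonWeight lam z j ≤ 1 := by
  have := Real.pow_div_factorial_le_exp _ h j
  rw [poissonWeight, mul_div_assoc, neg_mul, Real.exp_neg, inv_mul_le_iff₀ (Real.exp_pos _),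
    mul_one]
  exact this

theorem hasSum_poissonWeight_mul_pow (lam z w : ℝ) :
    HasSum (fun j => poissonWeight lam z j * w ^ j) (Real.exp (-(lam * (1 - w)) * z)) := by
  have := (NormedSpace.expSeries_div_hasSum_exp (w * (lam * z))).mul_left (Real.exp (-lam * z))
  rw [← Real.exp_eq_exp_ℝ, ← Real.exp_add] at this
  have hterm : (fun j => poissonWeight lam z j * w ^ j)
      = fun j => Real.exp (-lam * z) * ((w * (lam * z)) ^ j / j.factorial) := by
    funext j; simp only [poissonWeight]; ring
  rwa [hterm, show -(lam * (1 - w)) * z = -lam * z + w * (lam * z) by ring]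

end PoissonWeight

/-- `P(N(H) = j)` for `H` of law `ν` independent of the Poisson process `N` of rate `lam`. -/
noncomputable def poissonMixture (ν : Measure ℝ) (lam : ℝ) (j : ℕ) : ℝ :=
  ∫ z, poissonWeight lam z j ∂ν

section PoissonMixture

variable {ν : Measure ℝ} {lam : ℝ} (hν : ∀ᵐ z ∂ν, 0 ≤ z) (hlam : 0 ≤ lam)

include hν hlam in
theorem integrable_poissonWeight [IsFiniteMeasure ν] (j : ℕ) :
    Integrable (fun z => poissonWeight lam z j) ν := by
  refine Integrable.mono' (integrable_const 1) (by unfold poissonWeight; fun_prop) ?_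
  filter_upwards [hν] with z hz
  have h := mul_nonneg hlam hz
  rw [Real.norm_of_nonneg (poissonWeight_nonneg h j)]
  exact poissonWeight_le_one h j

include hν hlam in
theorem poissonMixture_nonneg (j : ℕ) : 0 ≤ poissonMixture ν lam j :=
  integral_nonneg_of_ae (hν.mono fun _ hz => poissonWeight_nonneg (mul_nonneg hlam hz) j)

include hν hlam in
theorem poissonMixture_le_one [IsProbabilityMeasure ν] (j : ℕ) : poissonMixture ν lam j ≤ 1 := by
  have := integral_mono_ae (integrable_poissonWeight hν hlam j) (integrable_const 1)
    (hν.mono fun _ hz => poissonWeight_le_one (mul_nonneg hlam hz) j)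
  simpa [poissonMixture] using this

include hν hlam in
theorem summable_norm_poissonMixture_mul_pow [IsProbabilityMeasure ν] {w : ℝ} (hw : |w| < 1) :
    Summable fun j => ‖poissonMixture ν lam j * w ^ j‖ := by
  refine (summable_geometric_of_lt_one (abs_nonneg w) hw).of_nonneg_of_le (fun _ => norm_nonneg _)
    fun j => ?_
  rw [norm_mul, norm_pow, Real.norm_of_nonneg (poissonMixture_nonneg hν hlam j), Real.norm_eq_abs]
  exact mul_le_of_le_one_left (by positivity) (poissonMixture_le_one hν hlam j)

include hν hlam in
theorem hasSum_poissonMixture_mul_pow [IsFiniteMeasure ν] {w : ℝ} (hw : |w| < 1) :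
    HasSum (fun j => poissonMixture ν lam j * w ^ j)
      (∫ z, Real.exp (-(lam * (1 - w)) * z) ∂ν) := by
  simp only [poissonMixture, ← integral_mul_const]
  refine hasSum_integral_of_dominated_convergence (fun j _ => |w| ^ j)
    (fun j => (integrable_poissonWeight hν hlam j).aestronglyMeasurable.mul_const _)
    (fun j => hν.mono fun z hz => ?_) (ae_of_all _ fun _ => summable_geometric_of_abs_lt_one
      (by rwa [abs_abs])) (integrable_const _)
    (ae_of_all _ fun z => hasSum_poissonWeight_mul_pow lam z w)
  have h := mul_nonneg hlam hz
  rw [norm_mul, norm_pow, Real.norm_of_nonneg (poissonWeight_nonneg h j), Real.norm_eq_abs]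
  exact mul_le_of_le_one_left (by positivity) (poissonWeight_le_one h j)

include hν hlam in
theorem integral_one_sub_sum_poissonWeight [IsProbabilityMeasure ν] (k : ℕ) :
    ∫ z, (1 - ∑ j ∈ range k, poissonWeight lam z j) ∂ν
      = 1 - ∑ j ∈ range k, poissonMixture ν lam j := by
  rw [integral_sub (integrable_const 1)
      (integrable_finsetSum _ fun j _ => integrable_poissonWeight hν hlam j),
    integral_finsetSum _ fun j _ => integrable_poissonWeight hν hlam j]
  simp [poissonMixture]

end PoissonMixture

/-- `μ s` is the law of `H^f(s)`. -/
structure HasLaplaceExponent (μ : ℝ → Measure ℝ) (f : ℝ → ℝ) : Prop where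
  isProbabilityMeasure : ∀ s, 0 < s → IsProbabilityMeasure (μ s)
  measure_Iio_zero : ∀ s, 0 < s → μ s (Iio 0) = 0
  integral_exp : ∀ s, 0 < s → ∀ x, 0 ≤ x →
    ∫ z, Real.exp (-x * z) ∂(μ s) = Real.exp (-s * f x)

namespace HasLaplaceExponent

variable {μ : ℝ → Measure ℝ} {f : ℝ → ℝ} {lam σ τ : ℝ} (hμ : HasLaplaceExponent μ f)
  (hlam : 0 < lam)

include hμ in
theorem ae_nonneg (hσ : 0 < σ) : ∀ᵐ z ∂μ σ, 0 ≤ z := by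
  simpa [ae_iff, Iio_def] using hμ.measure_Iio_zero σ hσ

include hμ hlam in
theorem hasSum_poissonMixture (hσ : 0 < σ) {w : ℝ} (hw : |w| < 1) :
    HasSum (fun j => poissonMixture (μ σ) lam j * w ^ j)
      (Real.exp (-σ * f (lam * (1 - w)))) := by
  have := hμ.isProbabilityMeasure σ hσ
  rw [← hμ.integral_exp σ hσ _ (mul_nonneg hlam.le (by linarith [abs_lt.1 hw]))]
  exact hasSum_poissonMixture_mul_pow (hμ.ae_nonneg hσ) hlam.le hw

include hμ hlam in
theorem poissonMixture_zero (hσ : 0 < σ) :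
    poissonMixture (μ σ) lam 0 = Real.exp (-σ * f lam) := by
  simpa [poissonMixture, poissonWeight] using hμ.integral_exp σ hσ lam hlam.le

include hμ hlam in
theorem poissonMixture_add (hσ : 0 < σ) (hτ : 0 < τ) (j : ℕ) :
    poissonMixture (μ (σ + τ)) lam j
      = ∑ i ∈ range (j + 1), poissonMixture (μ σ) lam i * poissonMixture (μ τ) lam (j - i) := by
  have hnorm : ∀ ρ, 0 < ρ → ∀ w : ℝ, |w| < 1 →
      Summable fun n => ‖poissonMixture (μ ρ) lam n * w ^ n‖ := fun ρ hρ w hw =>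
    have := hμ.isProbabilityMeasure ρ hρ
    summable_norm_poissonMixture_mul_pow (hμ.ae_nonneg hρ) hlam.le hw
  suffices h : (fun n => poissonMixture (μ (σ + τ)) lam n - ∑ i ∈ range (n + 1),
      poissonMixture (μ σ) lam i * poissonMixture (μ τ) lam (n - i)) = 0 from
    sub_eq_zero.1 (congrFun h j)
  refine eq_zero_of_hasSum_mul_pow_eq_zero one_pos fun w hw => ?_
  have := (hμ.hasSum_poissonMixture hlam (add_pos hσ hτ) hw).sub
    ((hμ.hasSum_poissonMixture hlam hσ hw).cauchyProduct_mul_pow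
      (hμ.hasSum_poissonMixture hlam hτ hw) (hnorm σ hσ w hw) (hnorm τ hτ w hw))
  rw [← Real.exp_add, ← add_mul, neg_add, sub_self] at this
  simpa only [sub_mul] using this

include hμ hlam in
theorem isConvSemigroup_exp_mul_poissonMixture :
    IsConvSemigroup fun j σ => Real.exp (f lam * σ) * poissonMixture (μ σ) lam j where
  zero σ hσ := by
    rw [hμ.poissonMixture_zero hlam hσ, ← Real.exp_add]
    ring_nf
    exact Real.exp_zero
  add σ τ hσ hτ j := by
    rw [hμ.poissonMixture_add hlam hσ hτ, mul_sum, mul_add, Real.exp_add]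
    exact sum_congr rfl fun _ _ => by ring

include hμ hlam in
theorem exists_hasDerivAt_poissonMixture_eq_convolution :
    ∃ b : ℕ → ℝ, (∀ l, 0 ≤ b l) ∧ (∀ w : ℝ, |w| < 1 → Summable fun l => b l * |w| ^ l) ∧
      ∀ j σ, 0 < σ → HasDerivAt (fun σ => poissonMixture (μ σ) lam j)
        (-f lam * poissonMixture (μ σ) lam j
          + ∑ i ∈ range (j + 1), poissonMixture (μ σ) lam i * b (j - i)) σ := by
  obtain ⟨b, hb, hder⟩ := (hμ.isConvSemigroup_exp_mul_poissonMixture hlam).exists_hasDerivAt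
    fun j σ hσ => mul_nonneg (Real.exp_nonneg _)
      (poissonMixture_nonneg (hμ.ae_nonneg hσ) hlam.le j)
  refine ⟨b, fun l => (hb l).1, fun w hw => ?_, fun j σ hσ => ?_⟩
  · have hw' : |(|w|)| < 1 := by rwa [abs_abs]
    refine ((hμ.hasSum_poissonMixture hlam one_pos hw').summable.mul_left
      (Real.exp (f lam))).of_nonneg_of_le (fun l => mul_nonneg (hb l).1 (by positivity)) fun l => ?_
    rw [← mul_assoc, ← mul_one (f lam)]
    exact mul_le_mul_of_nonneg_right (hb l).2 (by positivity)
  · have hinv : ∀ σ, Real.exp (-(f lam * σ)) * Real.exp (f lam * σ) = 1 := fun σ => by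
      rw [← Real.exp_add, neg_add_cancel, Real.exp_zero]
    have hexp : HasDerivAt (fun σ => Real.exp (-(f lam * σ)))
        (Real.exp (-(f lam * σ)) * -f lam) σ :=
      ((hasDerivAt_id σ).const_mul (f lam)).neg.exp.congr_deriv (by simp)
    refine ((hexp.mul (hder j σ hσ)).congr_of_eventuallyEq ?_).congr_deriv ?_
    · filter_upwards with σ'
      rw [Pi.mul_apply, ← mul_assoc, hinv, one_mul]
    · simp only [mul_sum, ← mul_assoc, hinv, one_mul]
      linear_combination (-(f lam * poissonMixture (μ σ) lam j)) * hinv σ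

include hμ hlam in
theorem exists_hasDerivAt_poissonMixture_bounded :
    ∃ d : ℕ → ℝ → ℝ, ∃ B : ℕ → ℝ,
      (∀ j σ, 0 < σ → HasDerivAt (fun σ => poissonMixture (μ σ) lam j) (d j σ) σ) ∧
      (∀ j σ, 0 < σ → |d j σ| ≤ B j) ∧ ∀ w : ℝ, |w| < 1 → Summable fun j => B j * |w| ^ j := by
  obtain ⟨b, hb0, hbsum, hder⟩ := hμ.exists_hasDerivAt_poissonMixture_eq_convolution hlam
  refine ⟨_, fun j => |f lam| + ∑ i ∈ range (j + 1), 1 * b (j - i), hder, fun j σ hσ => ?_,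
    fun w hw => ?_⟩
  · have hm0 := poissonMixture_nonneg (hμ.ae_nonneg hσ) hlam.le (lam := lam)
    have := hμ.isProbabilityMeasure σ hσ
    have hm1 := poissonMixture_le_one (hμ.ae_nonneg hσ) hlam.le (lam := lam)
    have hsum : 0 ≤ ∑ i ∈ range (j + 1), poissonMixture (μ σ) lam i * b (j - i) :=
      sum_nonneg fun i _ => mul_nonneg (hm0 i) (hb0 _)
    refine (abs_add_le _ _).trans (add_le_add ?_ ?_)
    · rw [abs_mul, abs_neg, abs_of_nonneg (hm0 j)]
      exact mul_le_of_le_one_right (abs_nonneg _) (hm1 j)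
    · rw [abs_of_nonneg hsum]
      exact sum_le_sum fun i _ => mul_le_mul_of_nonneg_right (hm1 i) (hb0 _)
  · have hgeo : HasSum (fun n => 1 * |w| ^ n) (1 - |w|)⁻¹ := by
      simpa using hasSum_geometric_of_lt_one (abs_nonneg w) hw
    have hconv := hgeo.cauchyProduct_mul_pow (hbsum w hw).hasSum hgeo.summable.abs
      (hbsum w hw).abs
    exact ((hgeo.summable.mul_left |f lam|).add hconv.summable).congr fun j => by ring

include hμ hlam in
theorem exists_hasSum_deriv_poissonMixture {s w : ℝ} (hs : 0 < s) (hw : |w| < 1) :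
    ∃ d : ℕ → ℝ, (∀ j, HasDerivAt (fun σ => poissonMixture (μ σ) lam j) (d j) s) ∧
      (Summable fun j => ‖d j * w ^ j‖) ∧
      HasSum (fun j => d j * w ^ j) (-f (lam * (1 - w)) * Real.exp (-s * f (lam * (1 - w)))) := by
  obtain ⟨d, B, hd, hdB, hB⟩ := hμ.exists_hasDerivAt_poissonMixture_bounded hlam
  have hbound : ∀ j σ, 0 < σ → ‖d j σ * w ^ j‖ ≤ B j * |w| ^ j := fun j σ hσ => by
    rw [norm_mul, norm_pow, Real.norm_eq_abs, Real.norm_eq_abs]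
    exact mul_le_mul_of_nonneg_right (hdB j σ hσ) (by positivity)
  have hseries := hasDerivAt_tsum_of_isPreconnected (hB w hw) isOpen_Ioi isPreconnected_Ioi
    (fun j σ hσ => (hd j σ hσ).mul_const (w ^ j)) hbound (mem_Ioi.2 hs)
    (hμ.hasSum_poissonMixture hlam hs hw).summable (mem_Ioi.2 hs)
  have hexp : HasDerivAt (fun σ => ∑' j, poissonMixture (μ σ) lam j * w ^ j)
      (-f (lam * (1 - w)) * Real.exp (-s * f (lam * (1 - w)))) s := by
    refine (((hasDerivAt_id s).neg.mul_const _).exp.congr_of_eventuallyEq ?_).congr_deriv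
      (by simp only [Pi.neg_apply, id_eq]; ring)
    filter_upwards [Ioi_mem_nhds hs] with σ hσ
    exact (hμ.hasSum_poissonMixture hlam hσ hw).tsum_eq
  have hsum : Summable fun j => ‖d j s * w ^ j‖ :=
    (hB w hw).of_nonneg_of_le (fun _ => norm_nonneg _) fun j => hbound j s hs
  refine ⟨fun j => d j s, fun j => hd j s hs, hsum, ?_⟩
  rw [← hseries.unique hexp]
  exact hsum.of_norm.hasSum

end HasLaplaceExponent

/-- The generating function of the first-passage time densities
`q_k^f(s) = (d/ds) ∫ P(N(z) ≥ k) P(H^f(s) ∈ dz)` satisfies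
`Σ_{k≥1} u^k q_k^f(s) = (u/(1-u)) f(λ(1-u)) e^{-s f(λ(1-u))}`. -/
theorem first_passage_generating_function
    (lam : ℝ) (hlam : 0 < lam) (f : ℝ → ℝ) (μ : ℝ → Measure ℝ)
    (hprob : ∀ s : ℝ, 0 < s → IsProbabilityMeasure (μ s))
    (hsupp : ∀ s : ℝ, 0 < s → μ s (Set.Iio 0) = 0)
    (hlaplace : ∀ s : ℝ, 0 < s → ∀ x : ℝ, 0 ≤ x →
      ∫ z, Real.exp (-x * z) ∂(μ s) = Real.exp (-s * f x))
    (q : ℕ → ℝ → ℝ)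
    (hq : ∀ (k : ℕ) (s : ℝ), q k s =
      deriv (fun σ : ℝ => ∫ z,
        (1 - ∑ j ∈ Finset.range k, Real.exp (-lam * z) * (lam * z) ^ j / (Nat.factorial j))
          ∂(μ σ)) s) :
    ∀ s : ℝ, 0 < s → ∀ u : ℝ, |u| < 1 →
      ∑' k : ℕ, u ^ (k + 1) * q (k + 1) s
        = u / (1 - u) * f (lam * (1 - u)) * Real.exp (-s * f (lam * (1 - u))) := by
  intro s hs u hu
  have hμ : HasLaplaceExponent μ f := ⟨hprob, hsupp, hlaplace⟩
  obtain ⟨d, hd, hdnorm, hdsum⟩ := hμ.exists_hasSum_deriv_poissonMixture hlam hs hu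
  have hqd : ∀ k, q k s = -∑ j ∈ range k, d j := fun k => by
    rw [hq]
    refine ((HasDerivAt.fun_sum fun j _ => hd j).const_sub 1).congr_of_eventuallyEq ?_ |>.deriv
    filter_upwards [Ioi_mem_nhds hs] with σ hσ
    have := hprob σ hσ
    exact integral_one_sub_sum_poissonWeight (hμ.ae_nonneg hσ) hlam.le k
  have hgeo : HasSum (fun n => 1 * u ^ n) (1 - u)⁻¹ := by
    simpa using hasSum_geometric_of_abs_lt_one hu
  have hcauchy := (hdsum.cauchyProduct_mul_pow hgeo hdnorm hgeo.summable.abs).mul_left (-u)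
  calc ∑' k, u ^ (k + 1) * q (k + 1) s
      = ∑' k, -u * ((∑ i ∈ range (k + 1), d i * 1) * u ^ k) :=
        tsum_congr fun k => by rw [hqd, pow_succ]; simp only [mul_one]; ring
    _ = u / (1 - u) * f (lam * (1 - u)) * Real.exp (-s * f (lam * (1 - u))) := by
        rw [hcauchy.tsum_eq]
        ring
end
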